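/- arXiv:2005.07151 — 3 statements merged into one kernel-verified Lean document; each statement's English description precedes it below -/
import Mathlib

section
/- Let E be a real inner product space and let u, v ∈ E be nonzero vectors. Then sin(angle(u, v)) ≤ ‖u − v‖ / ‖u‖. -/
open InnerProductGeometry

theorem sin_angle_le_norm_sub_div_norm_general
    {E : Type*} [NormedAddCommGroup E] [InnerProductSpace ℝ E]
    (u v : E) (hu : u ≠ 0) :
    Real.sin (angle u v) ≤ ‖u - v‖ / ‖u‖ := by
  -- Law of sines in the triangle `0, v, u`, then `sin ≤ 1` for the angle at `v`.
  rw [le_div_iff₀ (norm_pos_iff.mpr hu), sin_angle_mul_norm_eq_sin_angle_mul_norm]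
  exact mul_le_of_le_one_left (norm_nonneg _) (Real.sin_le_one _)

/-- For nonzero vectors `u, v` in a real inner product space,
`sin(angle(u, v)) ≤ ‖u − v‖ / ‖u‖`. -/
theorem sin_angle_le_norm_sub_div_norm
    {E : Type*} [NormedAddCommGroup E] [InnerProductSpace ℝ E]
    (u v : E) (hu : u ≠ 0) (hv : v ≠ 0) :
    Real.sin (angle u v) ≤ ‖u - v‖ / ‖u‖ :=
  sin_angle_le_norm_sub_div_norm_general u v hu
end

section
/- Let E be a real inner product space and let u, v, u′, v′ ∈ E be nonzero vectors. Then |angle(u′, v′) − angle(u, v)| ≤ angle(u, u′) + angle(v, v′). -/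
open InnerProductGeometry

theorem abs_angle_sub_angle_le_general
    {E : Type*} [NormedAddCommGroup E] [InnerProductSpace ℝ E]
    (u v u' v' : E) :
    |angle u' v' - angle u v| ≤ angle u u' + angle v v' := by
  have h₁ := angle_le_angle_add_angle u' u v'
  have h₂ := angle_le_angle_add_angle u v v'
  have h₃ := angle_le_angle_add_angle u u' v
  have h₄ := angle_le_angle_add_angle u' v' v
  rw [angle_comm u' u] at h₁
  rw [angle_comm v' v] at h₄
  rw [abs_sub_le_iff]
  constructor <;> linarith

/-- The change of the angle between two (bone) directions is bounded by the sum of the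
angle changes of the individual directions:
`|angle(u′, v′) − angle(u, v)| ≤ angle(u, u′) + angle(v, v′)`. -/
theorem abs_angle_sub_angle_le
    {E : Type*} [NormedAddCommGroup E] [InnerProductSpace ℝ E]
    (u v u' v' : E) (hu : u ≠ 0) (hv : v ≠ 0) (hu' : u' ≠ 0) (hv' : v' ≠ 0) :
    |angle u' v' - angle u v| ≤ angle u u' + angle v v' :=
  abs_angle_sub_angle_le_general u v u' v'
end

section
/- Let E be a real inner product space and let a, b, c, a′, b′, c′ ∈ E be points with a ≠ b, c ≠ b, a′ ≠ b′, and c′ ≠ b′ (so all four bone vectors are nonzero). Then sin(angle(a − b, a′ − b′)) ≤ (‖a′ − a‖ + ‖b′ − b‖) / ‖a − b‖, and consequently angle(a′ − b′, c′ − b′) ≤ angle(a − b, c − b) + angle(a − b, a′ − b′) + angle(c − b, c′ − b′), where sin(angle(c − b, c′ − b′)) ≤ (‖c′ − c‖ + ‖b′ − b‖) / ‖c − b‖. -/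
/-!
The law of sines in the triangle `0, x, y` gives
`sin (angle x y) * ‖x‖ = sin (angle y (x - y)) * ‖x - y‖ ≤ ‖x - y‖`, and for bones
`x = a - b`, `y = a' - b'` the difference `x - y` is at most `‖a' - a‖ + ‖b' - b‖`.
The joint-angle bound is the triangle inequality for angles, through `a - b` and then `c - b`.
-/

open InnerProductGeometry

lemma norm_sub_sub_sub_le {G : Type*} [SeminormedAddCommGroup G] (a b a' b' : G) :
    ‖(a - b) - (a' - b')‖ ≤ ‖a' - a‖ + ‖b' - b‖ :=
  calc ‖(a - b) - (a' - b')‖ = dist (a - b) (a' - b') := (dist_eq_norm _ _).symm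
    _ ≤ dist a a' + dist b b' := dist_sub_sub_le a b a' b'
    _ = ‖a' - a‖ + ‖b' - b‖ := by rw [dist_eq_norm', dist_eq_norm']

section

variable {V : Type*} [NormedAddCommGroup V] [InnerProductSpace ℝ V]

lemma sin_angle_mul_norm_le_norm_sub (x y : V) : Real.sin (angle x y) * ‖x‖ ≤ ‖x - y‖ := by
  rw [sin_angle_mul_norm_eq_sin_angle_mul_norm]
  exact mul_le_of_le_one_left (norm_nonneg _) (Real.sin_le_one _)

lemma sin_angle_le_norm_sub_div_norm_s9 {x : V} (hx : x ≠ 0) (y : V) :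
    Real.sin (angle x y) ≤ ‖x - y‖ / ‖x‖ :=
  (le_div_iff₀ (norm_pos_iff.mpr hx)).mpr (sin_angle_mul_norm_le_norm_sub x y)

lemma sin_angle_sub_sub_le {a b : V} (hab : a ≠ b) (a' b' : V) :
    Real.sin (angle (a - b) (a' - b')) ≤ (‖a' - a‖ + ‖b' - b‖) / ‖a - b‖ := by
  refine (sin_angle_le_norm_sub_div_norm_s9 (sub_ne_zero.mpr hab) _).trans ?_
  gcongr
  exact norm_sub_sub_sub_le a b a' b'

lemma angle_le_angle_add_angle_add_angle (u v u' v' : V) :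
    angle u' v' ≤ angle u v + angle u u' + angle v v' := by
  linarith [angle_le_angle_add_angle u' u v', angle_le_angle_add_angle u v v', angle_comm u' u]

end

theorem joint_angle_change_bound_general
    {E : Type*} [NormedAddCommGroup E] [InnerProductSpace ℝ E]
    (a b c a' b' c' : E) (hab : a ≠ b) (hcb : c ≠ b) :
    Real.sin (angle (a - b) (a' - b')) ≤ (‖a' - a‖ + ‖b' - b‖) / ‖a - b‖ ∧
    angle (a' - b') (c' - b') ≤
      angle (a - b) (c - b) + angle (a - b) (a' - b') + angle (c - b) (c' - b') ∧
    Real.sin (angle (c - b) (c' - b')) ≤ (‖c' - c‖ + ‖b' - b‖) / ‖c - b‖ :=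
  ⟨sin_angle_sub_sub_le hab a' b', angle_le_angle_add_angle_add_angle _ _ _ _,
    sin_angle_sub_sub_le hcb c' b'⟩

/-- The paper's upper bound `J′` on the change of a joint angle: for joints `a, b, c` and
their perturbed positions `a′, b′, c′`, the sine of the change of each bone direction is
bounded by the sum of the corresponding joint-displacement norms divided by the original
bone length, and the perturbed joint angle at `b′` exceeds the original joint angle at `b`
by at most the sum of the two bone-direction angle changes. -/
theorem joint_angle_change_bound
    {E : Type*} [NormedAddCommGroup E] [InnerProductSpace ℝ E]
    (a b c a' b' c' : E) (hab : a ≠ b) (hcb : c ≠ b) (hab' : a' ≠ b') (hcb' : c' ≠ b') :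
    Real.sin (angle (a - b) (a' - b')) ≤ (‖a' - a‖ + ‖b' - b‖) / ‖a - b‖ ∧
    angle (a' - b') (c' - b') ≤
      angle (a - b) (c - b) + angle (a - b) (a' - b') + angle (c - b) (c' - b') ∧
    Real.sin (angle (c - b) (c' - b')) ≤ (‖c' - c‖ + ‖b' - b‖) / ‖c - b‖ :=
  joint_angle_change_bound_general a b c a' b' c' hab hcb
end
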